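/- No unbiased estimator of the one-dimensional FID to a fixed Gaussian exists on classes containing two-component Gaussian mixtures: for P_α = (1−α)N(μ₀,σ₀²) + αN(μ₁,σ₁²) with (μ₀,σ₀²) ≠ (μ₁,σ₁²), the mean μ_α of P_α is affine in α and its variance σ_α² is a quadratic polynomial in α; consequently α ↦ FID(P_α, N(μ,σ²)) = (μ_α − μ)² + σ_α² + σ² − 2σ σ_α is not a polynomial in α (since σ_α = √(quadratic) is not polynomial unless the mixture is trivial), whereas any unbiased estimator based on n samples would make this map a polynomial of degree ≤ n. -/

import Mathlib

open MeasureTheory ProbabilityTheory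

/-- The two-component Gaussian mixture `(1-α)N(μ₀,σ₀²) + αN(μ₁,σ₁²)` on `ℝ`. -/
noncomputable def gaussMix (μ₀ σ₀ μ₁ σ₁ α : ℝ) : Measure ℝ :=
  ENNReal.ofReal (1 - α) • gaussianReal μ₀ (σ₀ ^ 2).toNNReal
    + ENNReal.ofReal α • gaussianReal μ₁ (σ₁ ^ 2).toNNReal

/-- The mean of the mixture, affine in `α`. -/
noncomputable def mixMean (μ₀ μ₁ α : ℝ) : ℝ := (1 - α) * μ₀ + α * μ₁

/-- The variance of the mixture, a quadratic polynomial in `α`. -/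
noncomputable def mixVar (μ₀ σ₀ μ₁ σ₁ α : ℝ) : ℝ :=
  (1 - α) * σ₀ ^ 2 + α * σ₁ ^ 2 + α * (1 - α) * (μ₀ - μ₁) ^ 2

/-- The one-dimensional FID from the mixture to the fixed Gaussian `N(μ,σ²)`. -/
noncomputable def fidMix (μ₀ σ₀ μ₁ σ₁ μ σ α : ℝ) : ℝ :=
  (mixMean μ₀ μ₁ α - μ) ^ 2 + mixVar μ₀ σ₀ μ₁ σ₁ α + σ ^ 2
    - 2 * σ * Real.sqrt (mixVar μ₀ σ₀ μ₁ σ₁ α)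

/-!
Writing each factor of `P_α^⊗n` as `(1-α) P₀ + α P₁` and expanding the product, `P_α^⊗n` is a
mixture of `2^n` fixed product measures whose weights are products of `α`'s and `(1-α)`'s, so the
expectation of any integrable statistic is a polynomial in `α` on `[0,1]`.

An unbiased estimator would thus make the FID equal to a polynomial `p` on `[0,1]`. Solving the FID
formula for the square root gives `√σ_α² = q(α)` with `q = ((μ_α - μ)² + σ_α² + σ² - p) / 2σ`
polynomial, hence `σ_α² = q²` as polynomials. But `σ_α²` is not the square of a polynomial: it has
degree one when `μ₀ = μ₁` (then `σ₀² ≠ σ₁²`), and leading coefficient `-(μ₀ - μ₁)² < 0` otherwise.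
-/

open Polynomial
open scoped ENNReal

namespace Polynomial

variable {R : Type*}

theorem even_natDegree_mul_self [Semiring R] [NoZeroDivisors R] (q : R[X]) :
    Even (q * q).natDegree := by
  rcases eq_or_ne q 0 with rfl | hq
  · simp
  · exact ⟨_, natDegree_mul hq hq⟩

theorem leadingCoeff_mul_self_nonneg [CommRing R] [LinearOrder R] [IsStrictOrderedRing R]
    (q : R[X]) : 0 ≤ (q * q).leadingCoeff := by
  rw [leadingCoeff_mul]
  exact mul_self_nonneg _

theorem eq_mul_self_of_sqrt_eval_eq {S : Set ℝ} (hS : S.Infinite) {V q : ℝ[X]}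
    (hV : ∀ x ∈ S, 0 ≤ V.eval x) (hq : ∀ x ∈ S, √(V.eval x) = q.eval x) : V = q * q :=
  eq_of_infinite_eval_eq _ _ <| hS.mono fun x hx => by
    rw [Set.mem_ofPred_eq, eval_mul, ← hq x hx, Real.mul_self_sqrt (hV x hx)]

end Polynomial

namespace MeasureTheory

variable {ι κ Ω : Type*} [Fintype ι] [DecidableEq ι] [Fintype κ] [MeasurableSpace Ω]
  {w : κ → ℝ≥0∞} {P : κ → Measure Ω} [∀ k, IsFiniteMeasure (P k)]

theorem Measure.pi_sum_smul (hw : ∀ k, w k ≠ ∞) :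
    Measure.pi (fun _ : ι => ∑ k, w k • P k)
      = ∑ s : ι → κ, (∏ i, w (s i)) • Measure.pi fun i => P (s i) := by
  have := fun k => (P k).smul_finite (hw k)
  refine Measure.pi_eq fun t _ => ?_
  simp only [Measure.finsetSum_apply, Measure.smul_apply, smul_eq_mul, Measure.pi_pi,
    ← Finset.prod_mul_distrib, Fintype.prod_sum]

theorem integrable_pi_of_integrable_pi_sum_smul (hw₀ : ∀ k, w k ≠ 0) (hw : ∀ k, w k ≠ ∞)
    {E : Type*} [NormedAddCommGroup E] {f : (ι → Ω) → E}
    (hf : Integrable f (Measure.pi fun _ : ι => ∑ k, w k • P k)) (s : ι → κ) :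
    Integrable f (Measure.pi fun i => P (s i)) := by
  rw [Measure.pi_sum_smul hw, integrable_finsetSum_measure] at hf
  exact (integrable_smul_measure (Finset.prod_ne_zero_iff.2 fun i _ => hw₀ (s i))
    (ENNReal.prod_ne_top fun i _ => hw (s i))).1 (hf s (Finset.mem_univ s))

theorem integral_pi_sum_smul (hw : ∀ k, w k ≠ ∞) {E : Type*} [NormedAddCommGroup E]
    [NormedSpace ℝ E] {f : (ι → Ω) → E}
    (hf : ∀ s : ι → κ, Integrable f (Measure.pi fun i => P (s i))) :
    ∫ x, f x ∂(Measure.pi fun _ : ι => ∑ k, w k • P k)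
      = ∑ s : ι → κ, (∏ i, (w (s i)).toReal) • ∫ x, f x ∂(Measure.pi fun i => P (s i)) := by
  rw [Measure.pi_sum_smul hw, integral_finsetSum_measure fun s _ =>
    (hf s).smul_measure (ENNReal.prod_ne_top fun i _ => hw (s i))]
  simp only [integral_smul_measure, ENNReal.toReal_prod]

end MeasureTheory

theorem exists_polynomial_eq_integral_pi_mixture {ι Ω : Type*} [Fintype ι] [DecidableEq ι]
    [MeasurableSpace Ω] (P Q : Measure Ω) [IsFiniteMeasure P] [IsFiniteMeasure Q] {α₀ : ℝ}
    (hα₀ : α₀ ∈ Set.Ioo 0 1) {f : (ι → Ω) → ℝ}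
    (hf : Integrable f
      (Measure.pi fun _ : ι => ENNReal.ofReal (1 - α₀) • P + ENNReal.ofReal α₀ • Q)) :
    ∃ p : ℝ[X], ∀ α ∈ Set.Icc (0 : ℝ) 1,
      ∫ x, f x ∂(Measure.pi fun _ : ι => ENNReal.ofReal (1 - α) • P + ENNReal.ofReal α • Q)
        = p.eval α := by
  set R : Bool → Measure Ω := fun b => bif b then Q else P
  set W : Bool → ℝ[X] := fun b => bif b then X else 1 - X
  have : ∀ b, IsFiniteMeasure (R b) := fun b => by cases b <;> assumption
  have hmix : ∀ α : ℝ, ENNReal.ofReal (1 - α) • P + ENNReal.ofReal α • Q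
      = ∑ b, ENNReal.ofReal ((W b).eval α) • R b := fun α => by
    simp [R, W, add_comm]
  have hR : ∀ s : ι → Bool, Integrable f (Measure.pi fun i => R (s i)) := by
    rw [hmix] at hf
    refine integrable_pi_of_integrable_pi_sum_smul (fun b => ?_) (fun _ => ENNReal.ofReal_ne_top) hf
    cases b <;> simp [W, hα₀.1, hα₀.2]
  refine ⟨∑ s : ι → Bool, (∏ i, W (s i)) * C (∫ x, f x ∂(Measure.pi fun i => R (s i))),
    fun α hα => ?_⟩
  rw [hmix, integral_pi_sum_smul (fun _ => ENNReal.ofReal_ne_top) hR]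
  simp only [eval_finsetSum, eval_mul, eval_prod, eval_C, smul_eq_mul]
  refine Finset.sum_congr rfl fun s _ => congrArg (· * _) <| Finset.prod_congr rfl fun i _ => ?_
  refine ENNReal.toReal_ofReal ?_
  cases s i <;> simp [W, hα.1, hα.2]

section MixtureVariance

variable {μ₀ σ₀ μ₁ σ₁ : ℝ}

noncomputable def mixVarPoly (μ₀ σ₀ μ₁ σ₁ : ℝ) : ℝ[X] :=
  C (-(μ₀ - μ₁) ^ 2) * X ^ 2 + C (σ₁ ^ 2 - σ₀ ^ 2 + (μ₀ - μ₁) ^ 2) * X + C (σ₀ ^ 2)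

theorem eval_mixVarPoly (α : ℝ) : (mixVarPoly μ₀ σ₀ μ₁ σ₁).eval α = mixVar μ₀ σ₀ μ₁ σ₁ α := by
  simp only [mixVarPoly, mixVar, eval_add, eval_mul, eval_pow, eval_C, eval_X]
  ring

theorem mixVar_nonneg {α : ℝ} (hα : α ∈ Set.Icc (0 : ℝ) 1) : 0 ≤ mixVar μ₀ σ₀ μ₁ σ₁ α := by
  obtain ⟨h₀, h₁⟩ := hα
  have := sub_nonneg.2 h₁
  unfold mixVar
  positivity

theorem mixVarPoly_ne_mul_self (hne : (μ₀, σ₀ ^ 2) ≠ (μ₁, σ₁ ^ 2)) (q : ℝ[X]) :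
    mixVarPoly μ₀ σ₀ μ₁ σ₁ ≠ q * q := by
  intro h
  rcases eq_or_ne μ₀ μ₁ with rfl | hμ
  · have hσ : σ₁ ^ 2 - σ₀ ^ 2 ≠ 0 := sub_ne_zero.2 fun h' => hne (by rw [h'])
    have hlin : mixVarPoly μ₀ σ₀ μ₀ σ₁ = C (σ₁ ^ 2 - σ₀ ^ 2) * X + C (σ₀ ^ 2) := by
      simp [mixVarPoly]
    have hdeg : (mixVarPoly μ₀ σ₀ μ₀ σ₁).natDegree = 1 := hlin ▸ natDegree_linear hσ
    exact Nat.not_even_one (hdeg ▸ h ▸ even_natDegree_mul_self q)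
  · have hμ' : μ₀ - μ₁ ≠ 0 := sub_ne_zero.2 hμ
    have hlead : (mixVarPoly μ₀ σ₀ μ₁ σ₁).leadingCoeff < 0 := by
      rw [mixVarPoly, leadingCoeff_quadratic (neg_ne_zero.2 (pow_ne_zero 2 hμ'))]
      exact neg_neg_of_pos (by positivity)
    exact hlead.not_ge (h ▸ leadingCoeff_mul_self_nonneg q)

theorem not_exists_polynomial_eq_fidMix {μ σ : ℝ} (hσ : σ ≠ 0)
    (hne : (μ₀, σ₀ ^ 2) ≠ (μ₁, σ₁ ^ 2)) :
    ¬ ∃ p : ℝ[X], ∀ α ∈ Set.Icc (0 : ℝ) 1, fidMix μ₀ σ₀ μ₁ σ₁ μ σ α = p.eval α := by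
  rintro ⟨p, hp⟩
  set q : ℝ[X] := C (2 * σ)⁻¹ *
    ((C μ₀ + C (μ₁ - μ₀) * X - C μ) ^ 2 + mixVarPoly μ₀ σ₀ μ₁ σ₁ + C (σ ^ 2) - p)
  refine mixVarPoly_ne_mul_self hne q <| eq_mul_self_of_sqrt_eval_eq (Set.Icc_infinite one_pos)
    (fun α hα => (eval_mixVarPoly α).symm ▸ mixVar_nonneg hα) fun α hα => ?_
  simp only [q, eval_mul, eval_sub, eval_add, eval_pow, eval_C, eval_X, eval_mixVarPoly,
    ← hp α hα, fidMix, mixMean]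
  field_simp
  ring

end MixtureVariance

theorem no_unbiased_fid_estimator_general
    (μ₀ σ₀ μ₁ σ₁ μ σ : ℝ) (hσ : 0 < σ)
    (hne : (μ₀, σ₀ ^ 2) ≠ (μ₁, σ₁ ^ 2)) (n : ℕ) :
    ¬ ∃ Dhat : (Fin n → ℝ) → ℝ, Measurable Dhat
        ∧ (∀ α ∈ Set.Icc (0 : ℝ) 1,
            Integrable Dhat (Measure.pi fun _ : Fin n => gaussMix μ₀ σ₀ μ₁ σ₁ α))
        ∧ ∀ α ∈ Set.Icc (0 : ℝ) 1,
            (∫ x, Dhat x ∂(Measure.pi fun _ : Fin n => gaussMix μ₀ σ₀ μ₁ σ₁ α))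
              = fidMix μ₀ σ₀ μ₁ σ₁ μ σ α := by
  rintro ⟨Dhat, -, hInt, hEq⟩
  obtain ⟨p, hp⟩ := exists_polynomial_eq_integral_pi_mixture _ _ (α₀ := 1 / 2) (by norm_num)
    (hInt (1 / 2) (by norm_num))
  exact not_exists_polynomial_eq_fidMix hσ.ne' hne
    ⟨p, fun α hα => (hEq α hα).symm.trans (hp α hα)⟩

/-- No unbiased estimator of the one-dimensional FID to a fixed Gaussian exists on classes
containing all two-component Gaussian mixtures of two distinct Gaussians. -/
theorem no_unbiased_fid_estimator
    (μ₀ σ₀ μ₁ σ₁ μ σ : ℝ) (hσ₀ : 0 < σ₀) (hσ₁ : 0 < σ₁) (hσ : 0 < σ)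
    (hne : (μ₀, σ₀ ^ 2) ≠ (μ₁, σ₁ ^ 2)) (n : ℕ) :
    ¬ ∃ Dhat : (Fin n → ℝ) → ℝ, Measurable Dhat
        ∧ (∀ α ∈ Set.Icc (0 : ℝ) 1,
            Integrable Dhat (Measure.pi fun _ : Fin n => gaussMix μ₀ σ₀ μ₁ σ₁ α))
        ∧ ∀ α ∈ Set.Icc (0 : ℝ) 1,
            (∫ x, Dhat x ∂(Measure.pi fun _ : Fin n => gaussMix μ₀ σ₀ μ₁ σ₁ α))
              = fidMix μ₀ σ₀ μ₁ σ₁ μ σ α :=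
  no_unbiased_fid_estimator_general μ₀ σ₀ μ₁ σ₁ μ σ hσ hne n
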